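/- arXiv:2206.11606 — 4 statements merged into one kernel-verified Lean document; each statement's English description precedes it below -/
import Mathlib

section
/- Let q ≥ 2 be an integer, let H be a finite graph and let F be a subgraph of H on the same vertex set. Let β, β₀, β₁ ≥ 1 be reals and let 𝛃 = (β_e) and 𝛃' = (β'_e) be the edge-activity vectors on H with β_e = β'_e = β for all e ∈ E(F), and β_e = β₀, β'_e = β₁ for all e ∈ E(H)∖E(F). Then, with μ = μ_{H;q,𝛃} and μ' = μ_{H;q,𝛃'}, it holds that |E_{σ∼μ}[m_F(σ)] − E_{σ∼μ'}[m_F(σ)]| ≤ |E(H)|² · |β₀ − β₁|. -/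
open Finset
attribute [local instance] Classical.propDecidable
noncomputable section

/-- The finset of edges of a graph on a finite vertex type. -/
def edgeFin {V : Type} [Fintype V] (G : SimpleGraph V) : Finset (Sym2 V) :=
  G.edgeSet.toFinite.toFinset

/-- The number of monochromatic edges among the edges in `E` under the colouring `σ`. -/
def mcount {V : Type} {q : ℕ} (E : Finset (Sym2 V)) (σ : V → Fin q) : ℕ :=
  (E.filter fun e => (e.map σ).IsDiag).card

/-- The Potts weight `β ^ (number of monochromatic edges of G)`. -/
def pW {V : Type} [Fintype V] (G : SimpleGraph V) (q : ℕ) (β : ℝ) (σ : V → Fin q) : ℝ :=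
  β ^ mcount (edgeFin G) σ

/-- Expectation of `f` under the distribution proportional to the weights `w`. -/
def gExp {S : Type} [Fintype S] (w f : S → ℝ) : ℝ :=
  (∑ σ : S, w σ * f σ) / ∑ σ : S, w σ

/-- Conditional expectation of `f` given the event `A`, under the distribution ∝ `w`. -/
def cExp {S : Type} [Fintype S] (w : S → ℝ) (A : S → Prop) (f : S → ℝ) : ℝ :=
  (∑ σ ∈ univ.filter A, w σ * f σ) / ∑ σ ∈ univ.filter A, w σ

/-- Probability of the event `A` under the distribution ∝ `w`. -/
def prW {S : Type} [Fintype S] (w : S → ℝ) (A : S → Prop) : ℝ :=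
  (∑ σ ∈ univ.filter A, w σ) / ∑ σ : S, w σ

/-- Conditional probability of `A` given `B` under the distribution ∝ `w`. -/
def cprW {S : Type} [Fintype S] (w : S → ℝ) (A B : S → Prop) : ℝ :=
  (∑ σ ∈ univ.filter (fun σ => A σ ∧ B σ), w σ) / ∑ σ ∈ univ.filter B, w σ

/-- The susceptibility `𝒮_{q,β}(G)`: the average number of monochromatic edges. -/
def susc {V : Type} [Fintype V] (G : SimpleGraph V) (q : ℕ) (β : ℝ) : ℝ :=
  gExp (pW G q β) (fun σ => (mcount (edgeFin G) σ : ℝ))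

/-- The degree of a vertex. -/
def deg {V : Type} [Fintype V] (G : SimpleGraph V) (v : V) : ℕ :=
  (univ.filter fun w => G.Adj v w).card

/-- An edge-interaction gadget: a connected (series-parallel) graph with two distinct
distinguished vertices (ports), each of degree one. -/
def IsEdgeGadget {V : Type} [Fintype V] (E : SimpleGraph V) (ρ ρ' : V) : Prop :=
  E.Connected ∧ ρ ≠ ρ' ∧ deg E ρ = 1 ∧ deg E ρ' = 1

/-- The effective interaction `B_ℰ = μ(σ ρ = σ ρ' = c₀) / μ(σ ρ = c₀, σ ρ' = c₁)`. -/
def effB {V : Type} [Fintype V] (E : SimpleGraph V) (q : ℕ) (β : ℝ) (ρ ρ' : V)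
    (c₀ c₁ : Fin q) : ℝ :=
  prW (pW E q β) (fun σ => σ ρ = c₀ ∧ σ ρ' = c₀) /
    prW (pW E q β) (fun σ => σ ρ = c₀ ∧ σ ρ' = c₁)

/-- The susceptibility gap `S_ℰ = E[m_ℰ | σρ = σρ'] - E[m_ℰ | σρ ≠ σρ']`. -/
def sGap {V : Type} [Fintype V] (E : SimpleGraph V) (q : ℕ) (β : ℝ) (ρ ρ' : V) : ℝ :=
  cExp (pW E q β) (fun σ => σ ρ = σ ρ') (fun σ => (mcount (edgeFin E) σ : ℝ)) -
    cExp (pW E q β) (fun σ => σ ρ ≠ σ ρ') (fun σ => (mcount (edgeFin E) σ : ℝ))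

/-- The Potts weight of `σ` with respect to an edge-activity vector `act`. -/
def pWvec {V : Type} [Fintype V] (H : SimpleGraph V) {q : ℕ} (act : Sym2 V → ℝ)
    (σ : V → Fin q) : ℝ :=
  ∏ e ∈ edgeFin H, if (e.map σ).IsDiag then act e else 1

lemma pow_sub_pow_abs_le {x y : ℝ} (hx : 1 ≤ x) (hy : 1 ≤ y) (n : ℕ) :
    |x ^ n - y ^ n| ≤ n * |x - y| * (x ^ n + y ^ n) := by
  have h := geom_sum₂_mul x y n
  rw [← h, abs_mul]
  have hx0 : (0:ℝ) ≤ x := le_trans zero_le_one hx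
  have hy0 : (0:ℝ) ≤ y := le_trans zero_le_one hy
  have hb : |∑ i ∈ Finset.range n, x ^ i * y ^ (n - 1 - i)| ≤ n * (x ^ n + y ^ n) := by
    calc |∑ i ∈ Finset.range n, x ^ i * y ^ (n - 1 - i)|
        ≤ ∑ i ∈ Finset.range n, |x ^ i * y ^ (n - 1 - i)| := Finset.abs_sum_le_sum_abs _ _
      _ ≤ ∑ _i ∈ Finset.range n, (x ^ n + y ^ n) := by
          apply Finset.sum_le_sum
          intro i hi
          rw [Finset.mem_range] at hi
          rw [abs_of_nonneg (by positivity)]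
          have hmax : (1:ℝ) ≤ max x y := le_trans hx (le_max_left _ _)
          have hmax0 : (0:ℝ) ≤ max x y := le_trans zero_le_one hmax
          calc x ^ i * y ^ (n - 1 - i)
              ≤ (max x y) ^ i * (max x y) ^ (n - 1 - i) := by
                gcongr
                · exact le_max_left _ _
                · exact le_max_right _ _
            _ = (max x y) ^ (i + (n - 1 - i)) := (pow_add _ _ _).symm
            _ ≤ (max x y) ^ n := pow_le_pow_right₀ hmax (by omega)
            _ ≤ x ^ n + y ^ n := by
                rcases max_cases x y with ⟨he, _⟩ | ⟨he, _⟩ <;> rw [he]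
                · nlinarith [pow_nonneg hy0 n]
                · nlinarith [pow_nonneg hx0 n]
      _ = n * (x ^ n + y ^ n) := by rw [Finset.sum_const, Finset.card_range, nsmul_eq_mul]
  calc |∑ i ∈ Finset.range n, x ^ i * y ^ (n - 1 - i)| * |x - y|
      ≤ (n * (x ^ n + y ^ n)) * |x - y| :=
        mul_le_mul_of_nonneg_right hb (abs_nonneg _)
    _ = n * |x - y| * (x ^ n + y ^ n) := by ring

lemma cross_abs_le {x y : ℝ} (hx : 1 ≤ x) (hy : 1 ≤ y) {a b N : ℕ} (ha : a ≤ N) (hb : b ≤ N) :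
    |x ^ a * y ^ b - y ^ a * x ^ b| ≤ N * |x - y| * (x ^ a * y ^ b + y ^ a * x ^ b) := by
  wlog hab : b ≤ a generalizing a b
  · have h := this hb ha (by omega)
    have e1 : x ^ b * y ^ a - y ^ b * x ^ a = -(x ^ a * y ^ b - y ^ a * x ^ b) := by ring
    rw [e1, abs_neg] at h
    calc |x ^ a * y ^ b - y ^ a * x ^ b|
        ≤ N * |x - y| * (x ^ b * y ^ a + y ^ b * x ^ a) := h
      _ = N * |x - y| * (x ^ a * y ^ b + y ^ a * x ^ b) := by ring
  have hx0 : (0:ℝ) ≤ x := le_trans zero_le_one hx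
  have hy0 : (0:ℝ) ≤ y := le_trans zero_le_one hy
  obtain ⟨k, rfl⟩ : ∃ k, a = b + k := ⟨a - b, by omega⟩
  have hkN : (k:ℝ) ≤ N := by exact_mod_cast by omega
  have hfact : x ^ (b + k) * y ^ b - y ^ (b + k) * x ^ b
      = x ^ b * y ^ b * (x ^ k - y ^ k) := by rw [pow_add, pow_add]; ring
  rw [hfact, abs_mul, abs_of_nonneg (by positivity : (0:ℝ) ≤ x ^ b * y ^ b)]
  calc x ^ b * y ^ b * |x ^ k - y ^ k|
      ≤ x ^ b * y ^ b * (k * |x - y| * (x ^ k + y ^ k)) :=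
        mul_le_mul_of_nonneg_left (pow_sub_pow_abs_le hx hy _) (by positivity)
    _ = (k:ℝ) * (|x - y| * (x ^ (b+k) * y ^ b + y ^ (b+k) * x ^ b)) := by
        rw [pow_add, pow_add]; ring
    _ ≤ (N:ℝ) * (|x - y| * (x ^ (b+k) * y ^ b + y ^ (b+k) * x ^ b)) :=
        mul_le_mul_of_nonneg_right hkN (by positivity)
    _ = N * |x - y| * (x ^ (b+k) * y ^ b + y ^ (b+k) * x ^ b) := by ring

lemma gExp_abs_sub_le {S : Type} [Fintype S] [Nonempty S] (w w' m : S → ℝ)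
    (hw : ∀ σ, 0 < w σ) (hw' : ∀ σ, 0 < w' σ) {C : ℝ}
    (hpair : ∀ σ τ, |(m σ - m τ) * (w σ * w' τ - w' σ * w τ)|
      ≤ C * (w σ * w' τ + w τ * w' σ)) :
    |gExp w m - gExp w' m| ≤ C := by
  unfold gExp
  set A := ∑ σ : S, w σ * m σ with hA
  set B := ∑ σ : S, w σ with hB
  set A' := ∑ σ : S, w' σ * m σ with hA'
  set B' := ∑ σ : S, w' σ with hB'
  have hBpos : 0 < B := Finset.sum_pos (fun σ _ => hw σ) Finset.univ_nonempty
  have hB'pos : 0 < B' := Finset.sum_pos (fun σ _ => hw' σ) Finset.univ_nonempty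
  have h2 : ∑ σ : S, ∑ τ : S, (m σ - m τ) * (w σ * w' τ - w' σ * w τ)
      = 2 * (A * B' - A' * B) := by
    have hptw : ∀ σ τ : S, (m σ - m τ) * (w σ * w' τ - w' σ * w τ)
        = (w σ * m σ) * w' τ - (w' σ * m σ) * w τ - w σ * (w' τ * m τ)
          + w' σ * (w τ * m τ) := fun σ τ => by ring
    simp only [hptw, Finset.sum_add_distrib, Finset.sum_sub_distrib,
      ← Finset.sum_mul, ← Finset.mul_sum]
    rw [hA, hB, hA', hB']
    ring
  have habs : |2 * (A * B' - A' * B)| ≤ 2 * (C * (B * B')) := by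
    rw [← h2]
    calc |∑ σ : S, ∑ τ : S, (m σ - m τ) * (w σ * w' τ - w' σ * w τ)|
        ≤ ∑ σ : S, ∑ τ : S, |(m σ - m τ) * (w σ * w' τ - w' σ * w τ)| := by
          refine (Finset.abs_sum_le_sum_abs _ _).trans ?_
          exact Finset.sum_le_sum fun σ _ => Finset.abs_sum_le_sum_abs _ _
      _ ≤ ∑ σ : S, ∑ τ : S, C * (w σ * w' τ + w τ * w' σ) :=
          Finset.sum_le_sum fun σ _ => Finset.sum_le_sum fun τ _ => hpair σ τ
      _ = 2 * (C * (B * B')) := by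
          simp only [mul_add, Finset.sum_add_distrib, ← Finset.mul_sum, ← Finset.sum_mul]
          rw [hB, hB']
          ring
  have hkey : |A * B' - A' * B| ≤ C * (B * B') := by
    rw [abs_mul, abs_of_nonneg (by norm_num : (0:ℝ) ≤ 2)] at habs
    linarith
  rw [div_sub_div _ _ hBpos.ne' hB'pos.ne', abs_div,
    abs_of_pos (mul_pos hBpos hB'pos), div_le_iff₀ (mul_pos hBpos hB'pos)]
  calc |A * B' - B * A'| = |A * B' - A' * B| := by rw [mul_comm B A']
    _ ≤ C * (B * B') := hkey

lemma pWvec_factor {V : Type} [Fintype V] (H : SimpleGraph V) {q : ℕ} (act : Sym2 V → ℝ)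
    (Ef : Finset (Sym2 V)) (hsub : Ef ⊆ edgeFin H) (β γ : ℝ)
    (hact : ∀ e ∈ edgeFin H, act e = if e ∈ Ef then β else γ) (σ : V → Fin q) :
    pWvec H act σ = β ^ mcount Ef σ * γ ^ mcount (edgeFin H \ Ef) σ := by
  unfold pWvec mcount
  rw [← Finset.prod_sdiff hsub]
  rw [mul_comm]
  congr 1
  · rw [Finset.prod_congr rfl (fun e he => by
      rw [hact e (hsub he), if_pos he])]
    rw [Finset.prod_ite, Finset.prod_const, Finset.prod_const_one, mul_one]
  · rw [Finset.prod_congr rfl (fun e he => by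
      rw [hact e (Finset.mem_sdiff.mp he).1, if_neg (Finset.mem_sdiff.mp he).2])]
    rw [Finset.prod_ite, Finset.prod_const, Finset.prod_const_one, mul_one]

/-- stability of the expected number of monochromatic `F`-edges under a
perturbation of the edge activities outside `F`. -/
theorem stmt_0 {V : Type} [Fintype V] (q : ℕ) (hq : 2 ≤ q)
    (H F : SimpleGraph V) (hFH : F ≤ H)
    (β β₀ β₁ : ℝ) (hβ : 1 ≤ β) (hβ₀ : 1 ≤ β₀) (hβ₁ : 1 ≤ β₁)
    (act act' : Sym2 V → ℝ)
    (hact : ∀ e ∈ edgeFin H, act e = if e ∈ edgeFin F then β else β₀)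
    (hact' : ∀ e ∈ edgeFin H, act' e = if e ∈ edgeFin F then β else β₁) :
    |gExp (pWvec H act (q := q)) (fun σ => (mcount (edgeFin F) σ : ℝ)) -
        gExp (pWvec H act' (q := q)) (fun σ => (mcount (edgeFin F) σ : ℝ))| ≤
      ((edgeFin H).card : ℝ) ^ 2 * |β₀ - β₁| := by
  have hsub : edgeFin F ⊆ edgeFin H := by
    intro e he
    simp only [edgeFin, Set.Finite.mem_toFinset] at he ⊢
    exact SimpleGraph.edgeSet_mono hFH he
  haveI : Nonempty (Fin q) := ⟨⟨0, by omega⟩⟩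
  have hβ0 : (0:ℝ) ≤ β := le_trans zero_le_one hβ
  set Ef := edgeFin F with hEf
  set E := edgeFin H with hE
  set N := E.card with hN
  have hw : ∀ σ : V → Fin q, pWvec H act σ = β ^ mcount Ef σ * β₀ ^ mcount (E \ Ef) σ :=
    fun σ => pWvec_factor H act Ef hsub β β₀ hact σ
  have hw' : ∀ σ : V → Fin q, pWvec H act' σ = β ^ mcount Ef σ * β₁ ^ mcount (E \ Ef) σ :=
    fun σ => pWvec_factor H act' Ef hsub β β₁ hact' σ
  have hfle : ∀ σ : V → Fin q, mcount Ef σ ≤ N := fun σ =>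
    le_trans (Finset.card_filter_le _ _) (Finset.card_le_card hsub)
  have hgle : ∀ σ : V → Fin q, mcount (E \ Ef) σ ≤ N := fun σ =>
    le_trans (Finset.card_filter_le _ _) (Finset.card_le_card Finset.sdiff_subset)
  apply gExp_abs_sub_le
  · intro σ
    rw [hw σ]
    have h1 : (0:ℝ) < β := lt_of_lt_of_le zero_lt_one hβ
    have h2 : (0:ℝ) < β₀ := lt_of_lt_of_le zero_lt_one hβ₀
    positivity
  · intro σ
    rw [hw' σ]
    have h1 : (0:ℝ) < β := lt_of_lt_of_le zero_lt_one hβ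
    have h2 : (0:ℝ) < β₁ := lt_of_lt_of_le zero_lt_one hβ₁
    positivity
  · intro σ τ
    rw [hw σ, hw τ, hw' σ, hw' τ]
    have hmabs : |(mcount Ef σ : ℝ) - (mcount Ef τ : ℝ)| ≤ (N : ℝ) := by
      have h1 : (mcount Ef σ : ℝ) ≤ N := by exact_mod_cast hfle σ
      have h2 : (mcount Ef τ : ℝ) ≤ N := by exact_mod_cast hfle τ
      have h3 : (0:ℝ) ≤ (mcount Ef σ : ℝ) := Nat.cast_nonneg _
      have h4 : (0:ℝ) ≤ (mcount Ef τ : ℝ) := Nat.cast_nonneg _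
      rw [abs_sub_le_iff]
      constructor <;> linarith
    have key := cross_abs_le hβ₀ hβ₁ (hgle σ) (hgle τ)
    have hPpos : (0:ℝ) ≤ β ^ mcount Ef σ * β ^ mcount Ef τ := by positivity
    have e : β ^ mcount Ef σ * β₀ ^ mcount (E \ Ef) σ *
          (β ^ mcount Ef τ * β₁ ^ mcount (E \ Ef) τ) -
        β ^ mcount Ef σ * β₁ ^ mcount (E \ Ef) σ *
          (β ^ mcount Ef τ * β₀ ^ mcount (E \ Ef) τ)
        = (β ^ mcount Ef σ * β ^ mcount Ef τ) *
          (β₀ ^ mcount (E \ Ef) σ * β₁ ^ mcount (E \ Ef) τ -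
            β₁ ^ mcount (E \ Ef) σ * β₀ ^ mcount (E \ Ef) τ) := by ring
    rw [e, abs_mul, abs_mul, abs_of_nonneg hPpos]
    calc |(mcount Ef σ : ℝ) - (mcount Ef τ : ℝ)| *
          (β ^ mcount Ef σ * β ^ mcount Ef τ *
            |β₀ ^ mcount (E \ Ef) σ * β₁ ^ mcount (E \ Ef) τ -
              β₁ ^ mcount (E \ Ef) σ * β₀ ^ mcount (E \ Ef) τ|)
        ≤ (N : ℝ) * (β ^ mcount Ef σ * β ^ mcount Ef τ *
            ((N : ℝ) * |β₀ - β₁| *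
              (β₀ ^ mcount (E \ Ef) σ * β₁ ^ mcount (E \ Ef) τ +
                β₁ ^ mcount (E \ Ef) σ * β₀ ^ mcount (E \ Ef) τ))) := by
          apply mul_le_mul hmabs (mul_le_mul_of_nonneg_left key hPpos)
            (by positivity) (Nat.cast_nonneg _)
      _ = (N : ℝ) ^ 2 * |β₀ - β₁| *
            (β ^ mcount Ef σ * β₀ ^ mcount (E \ Ef) σ *
              (β ^ mcount Ef τ * β₁ ^ mcount (E \ Ef) τ) +
            β ^ mcount Ef τ * β₀ ^ mcount (E \ Ef) τ *
              (β ^ mcount Ef σ * β₁ ^ mcount (E \ Ef) σ)) := by ring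
end
end

section
/- Let (β,γ) be antiferromagnetic, let λ, λ₁, λ₂ > 0, and let (a,b,c) be a vertex-edge observable. Let G = (V,E) be a finite graph and S ⊆ V. For i ∈ {1,2}, let 𝛌_i be the vertex-activity vector on V assigning activity λ_i to every v ∈ S and activity λ to every v ∈ V∖S, and let μ_i be the Gibbs distribution on G with parameters β, γ, 𝛌_i. Then for every subgraph F of G it holds that |E_{σ∼μ₂}[o_F(σ)] − E_{σ∼μ₁}[o_F(σ)]| ≤ 2(|a|+|b|+|c|)(|V|² + |E|²) · |λ₂/λ₁ − 1|. -/
/-!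
Raising the activity on `S` from `λ₁` to `λ₂` multiplies the weight of `σ` by `r ^ k(σ)`, where
`r = λ₂ / λ₁` and `k(σ) ≤ |V|` counts the vertices of `S` with spin 1. If `w ≤ w' ≤ R w`
pointwise, the averages of a function bounded by `B` under `w` and `w'` differ by at most
`2 B (1 - 1/R)`; with `R = r ^ |V|` (or `r⁻¹ ^ |V|` when `r < 1`) Bernoulli's inequality turns
this into `2 B |V| |r - 1|`, and `|o_F| ≤ |a| |V| + (|b| + |c|) |E|`.
-/

open Finset
attribute [local instance] Classical.propDecidable
noncomputable section

/-- `|σ|`: the number of vertices that get spin 1 (`true`). -/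
def nOnes {V : Type} [Fintype V] (σ : V → Bool) : ℕ :=
  (univ.filter fun v => σ v = true).card

/-- `m_s(σ)`: the number of edges in `E` both of whose endpoints get spin `s`. -/
def mB {V : Type} (E : Finset (Sym2 V)) (σ : V → Bool) (s : Bool) : ℕ :=
  (E.filter fun e => e.map σ = Sym2.diag s).card

/-- The 2-spin weight `λ^|σ| β^{m₀(σ)} γ^{m₁(σ)}`. -/
def w2 {V : Type} [Fintype V] (G : SimpleGraph V) (β γ lam : ℝ) (σ : V → Bool) : ℝ :=
  lam ^ nOnes σ * β ^ mB (edgeFin G) σ false * γ ^ mB (edgeFin G) σ true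

/-- The `(a,b,c)` vertex-edge observable evaluated on vertex set `Vs` and edge set `Es`:
`a|σ| + b m₀(σ) + c m₁(σ)`. -/
def obsVal {V : Type} (a b c : ℝ) (Vs : Finset V) (Es : Finset (Sym2 V)) (σ : V → Bool) : ℝ :=
  a * (Vs.filter fun v => σ v = true).card + b * mB Es σ false + c * mB Es σ true

/-- `(β,γ)` is antiferromagnetic: `βγ < 1` (with `β,γ ≥ 0`) and at least one is nonzero. -/
def Antiferro (β γ : ℝ) : Prop := 0 ≤ β ∧ 0 ≤ γ ∧ β * γ < 1 ∧ (β ≠ 0 ∨ γ ≠ 0)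

/-- The graph obtained from a tree `T` by attaching a distinct 4-cycle at each
vertex in `S` (identifying the vertex with one vertex of the cycle). -/
def attach4 {W : Type} (T : SimpleGraph W) (S : Set W) : SimpleGraph (W ⊕ (↥S × Fin 3)) :=
  SimpleGraph.fromRel fun x y =>
    match x, y with
    | Sum.inl w, Sum.inl w' => T.Adj w w'
    | Sum.inl w, Sum.inr (s, i) => w = s.val ∧ (i = 0 ∨ i = 2)
    | Sum.inr _, Sum.inl _ => False
    | Sum.inr (s, i), Sum.inr (s', j) => s = s' ∧ ((i = 0 ∧ j = 1) ∨ (i = 1 ∧ j = 2))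

/-- A field gadget: a rooted tree whose root has degree one; when `λ = (1-β)/(1-γ)`,
it may instead be obtained from such a rooted tree by replacing some (non-root) leaves
with distinct cycles of length four. -/
def IsFieldGadget (β γ lam : ℝ) {X : Type} (G : SimpleGraph X) (ρ : X) : Prop :=
  (∃! u, G.Adj ρ u) ∧
  (G.IsTree ∨
    (lam = (1 - β) / (1 - γ) ∧
      ∃ (W : Type) (T : SimpleGraph W) (S : Set W) (ρ' : W),
        ∃ e : G ≃g attach4 T S,
        T.IsTree ∧ (∀ s ∈ S, s ≠ ρ' ∧ (∃! y, T.Adj s y)) ∧ e ρ = Sum.inl ρ'))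

/-- The effective field `R_𝒯 = (1/λ) μ(σ ρ = 1)/μ(σ ρ = 0)` of a field gadget. -/
def Rf {V : Type} [Fintype V] (T : SimpleGraph V) (β γ lam : ℝ) (ρ : V) : ℝ :=
  (1 / lam) *
    (prW (w2 T β γ lam) (fun σ => σ ρ = true) / prW (w2 T β γ lam) (fun σ => σ ρ = false))

/-- The observable gap `O_𝒯 = E[o_𝒯 | σρ = 1] - a - E[o_𝒯 | σρ = 0]` of a field gadget. -/
def Og {V : Type} [Fintype V] (a b c : ℝ) (T : SimpleGraph V) (β γ lam : ℝ) (ρ : V) : ℝ :=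
  cExp (w2 T β γ lam) (fun σ => σ ρ = true) (obsVal a b c univ (edgeFin T)) - a -
    cExp (w2 T β γ lam) (fun σ => σ ρ = false) (obsVal a b c univ (edgeFin T))

/-- The 2-spin weight with a vertex-activity vector `lamv`:
`β^{m₀(σ)} γ^{m₁(σ)} ∏_{v : σ(v)=1} λ_v`. -/
def w2vec {V : Type} [Fintype V] (G : SimpleGraph V) (β γ : ℝ) (lamv : V → ℝ)
    (σ : V → Bool) : ℝ :=
  β ^ mB (edgeFin G) σ false * γ ^ mB (edgeFin G) σ true *
    ∏ v ∈ univ.filter (fun v => σ v = true), lamv v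

section WeightedAverage

variable {Ω : Type} [Fintype Ω] {w w' f : Ω → ℝ} {B : ℝ}

lemma sum_mul_sub_gExp_eq_zero (hZ : ∑ σ, w σ ≠ 0) :
    ∑ σ, w σ * (f σ - gExp w f) = 0 := by
  simp only [mul_sub, sum_sub_distrib, ← sum_mul, gExp]
  rw [mul_div_cancel₀ _ hZ, sub_self]

lemma gExp_sub_gExp_eq (hZ : ∑ σ, w σ ≠ 0) (hZ' : ∑ σ, w' σ ≠ 0) :
    gExp w' f - gExp w f = (∑ σ, (w' σ - w σ) * (f σ - gExp w f)) / ∑ σ, w' σ := by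
  have hzero := sum_mul_sub_gExp_eq_zero (f := f) hZ
  calc gExp w' f - gExp w f = (∑ σ, w' σ * (f σ - gExp w f)) / ∑ σ, w' σ := by
        simp only [mul_sub, sum_sub_distrib, ← sum_mul]
        rw [sub_div, mul_div_cancel_left₀ _ hZ']
        rfl
    _ = _ := by simp only [sub_mul, sum_sub_distrib, hzero, sub_zero]

lemma abs_gExp_le (hw : ∀ σ, 0 ≤ w σ) (hZ : 0 < ∑ σ, w σ) (hf : ∀ σ, |f σ| ≤ B) :
    |gExp w f| ≤ B := by
  rw [gExp, abs_div, abs_of_pos hZ, div_le_iff₀ hZ, mul_sum]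
  refine (abs_sum_le_sum_abs _ _).trans (sum_le_sum fun σ _ => ?_)
  rw [abs_mul, abs_of_nonneg (hw σ), mul_comm]
  exact mul_le_mul_of_nonneg_right (hf σ) (hw σ)

/- The difference is the `w'`-average of `f - 𝔼_w f` against the excess weight `w' - w`,
whose total mass is at most `(1 - 1/R)` times that of `w'`. -/
lemma abs_gExp_sub_gExp_le (hw : ∀ σ, 0 ≤ w σ) (hww' : ∀ σ, w σ ≤ w' σ)
    {R : ℝ} (hR : 1 ≤ R) (hw'R : ∀ σ, w' σ ≤ R * w σ) (hB : 0 ≤ B) (hf : ∀ σ, |f σ| ≤ B) :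
    |gExp w' f - gExp w f| ≤ 2 * B * (1 - R⁻¹) := by
  have hZZ' : ∑ σ, w σ ≤ ∑ σ, w' σ := sum_le_sum fun σ _ => hww' σ
  have hZ'R : ∑ σ, w' σ ≤ R * ∑ σ, w σ := by
    rw [mul_sum]; exact sum_le_sum fun σ _ => hw'R σ
  rcases (sum_nonneg fun σ _ => hw σ).eq_or_lt with hZ | hZ
  · -- all weights vanish, and both averages are `0 / 0 = 0`
    have hZ' : ∑ σ, w' σ = 0 := le_antisymm (by simpa [← hZ] using hZ'R) (hZ ▸ hZZ')
    have hR' : 0 ≤ 1 - R⁻¹ := sub_nonneg.2 (inv_le_one_of_one_le₀ hR)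
    simp only [gExp, ← hZ, hZ', div_zero, sub_self, abs_zero]
    positivity
  have hZ' : 0 < ∑ σ, w' σ := hZ.trans_le hZZ'
  have hdev : ∀ σ, |f σ - gExp w f| ≤ 2 * B := fun σ =>
    (abs_sub _ _).trans (by linarith [hf σ, abs_gExp_le hw hZ hf])
  have hexcess : ∑ σ, (w' σ - w σ) ≤ (1 - R⁻¹) * ∑ σ, w' σ := by
    have : (∑ σ, w' σ) * R⁻¹ ≤ ∑ σ, w σ := by
      rw [mul_inv_le_iff₀ (by linarith)]; linarith
    rw [sum_sub_distrib]; linarith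
  rw [gExp_sub_gExp_eq hZ.ne' hZ'.ne', abs_div, abs_of_pos hZ', div_le_iff₀ hZ']
  calc |∑ σ, (w' σ - w σ) * (f σ - gExp w f)|
      ≤ ∑ σ, (w' σ - w σ) * (2 * B) := by
        refine (abs_sum_le_sum_abs _ _).trans (sum_le_sum fun σ _ => ?_)
        rw [abs_mul, abs_of_nonneg (sub_nonneg.2 (hww' σ))]
        exact mul_le_mul_of_nonneg_left (hdev σ) (sub_nonneg.2 (hww' σ))
    _ = 2 * B * ∑ σ, (w' σ - w σ) := by rw [← sum_mul, mul_comm]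
    _ ≤ 2 * B * ((1 - R⁻¹) * ∑ σ, w' σ) := by gcongr
    _ = 2 * B * (1 - R⁻¹) * ∑ σ, w' σ := by ring

variable {k : Ω → ℕ} {n : ℕ} {t : ℝ}

lemma abs_gExp_mul_pow_sub_gExp_le_of_one_le (hk : ∀ σ, k σ ≤ n) (ht : 1 ≤ t)
    (hw : ∀ σ, 0 ≤ w σ) (hB : 0 ≤ B) (hf : ∀ σ, |f σ| ≤ B) :
    |gExp (fun σ => w σ * t ^ k σ) f - gExp w f| ≤ 2 * B * n * (1 - t⁻¹) := by
  have hlower : ∀ σ, w σ ≤ w σ * t ^ k σ := fun σ =>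
    le_mul_of_one_le_right (hw σ) (one_le_pow₀ ht)
  have hupper : ∀ σ, w σ * t ^ k σ ≤ t ^ n * w σ := fun σ => by
    rw [mul_comm]; exact mul_le_mul_of_nonneg_right (pow_le_pow_right₀ ht (hk σ)) (hw σ)
  have hbound := abs_gExp_sub_gExp_le hw hlower (one_le_pow₀ ht) hupper hB hf
  have hbernoulli : 1 - (t ^ n)⁻¹ ≤ n * (1 - t⁻¹) := by
    have := one_add_mul_le_pow (a := t⁻¹ - 1)
      (by linarith [inv_nonneg.2 (zero_le_one.trans ht)]) n
    rw [add_sub_cancel, inv_pow] at this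
    linarith
  calc _ ≤ 2 * B * (1 - (t ^ n)⁻¹) := hbound
    _ ≤ 2 * B * (n * (1 - t⁻¹)) := by gcongr
    _ = 2 * B * n * (1 - t⁻¹) := by ring

lemma abs_gExp_mul_pow_sub_gExp_le (hk : ∀ σ, k σ ≤ n) (ht : 0 < t)
    (hw : ∀ σ, 0 ≤ w σ) (hB : 0 ≤ B) (hf : ∀ σ, |f σ| ≤ B) :
    |gExp (fun σ => w σ * t ^ k σ) f - gExp w f| ≤ 2 * B * n * |t - 1| := by
  rcases le_or_gt 1 t with ht1 | ht1
  · refine (abs_gExp_mul_pow_sub_gExp_le_of_one_le hk ht1 hw hB hf).trans ?_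
    have : 1 - t⁻¹ ≤ t - 1 := by
      have := mul_inv_cancel₀ ht.ne'
      nlinarith [inv_pos.2 ht]
    rw [abs_of_nonneg (by linarith)]
    gcongr
  · have hback : (fun σ => (w σ * t ^ k σ) * t⁻¹ ^ k σ) = w := by
      ext σ; rw [mul_assoc, ← mul_pow, mul_inv_cancel₀ ht.ne', one_pow, mul_one]
    have := abs_gExp_mul_pow_sub_gExp_le_of_one_le (w := fun σ => w σ * t ^ k σ) hk
      ((one_le_inv₀ ht).2 ht1.le) (fun σ => mul_nonneg (hw σ) (pow_nonneg ht.le _)) hB hf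
    rw [hback, abs_sub_comm, inv_inv] at this
    rwa [abs_sub_comm t 1, abs_of_pos (sub_pos.2 ht1)]

end WeightedAverage

lemma w2vec_nonneg {V : Type} [Fintype V] (G : SimpleGraph V) {β γ : ℝ} (hβ : 0 ≤ β)
    (hγ : 0 ≤ γ) {l : V → ℝ} (hl : ∀ v, 0 ≤ l v) (σ : V → Bool) : 0 ≤ w2vec G β γ l σ :=
  mul_nonneg (by positivity) (prod_nonneg fun v _ => hl v)

lemma w2vec_eq_mul_pow {V : Type} [Fintype V] (G : SimpleGraph V) (β γ : ℝ) {l l' : V → ℝ}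
    (S : Set V) {t : ℝ} (hl : ∀ v, l' v = l v * if v ∈ S then t else 1) (σ : V → Bool) :
    w2vec G β γ l' σ =
      w2vec G β γ l σ * t ^ (univ.filter fun v => σ v = true ∧ v ∈ S).card := by
  simp only [w2vec, hl, prod_mul_distrib, prod_ite, prod_const, one_pow, mul_one, filter_filter,
    mul_assoc]

lemma abs_obsVal_le {V : Type} (a b c : ℝ) (Vs : Finset V) (Es : Finset (Sym2 V))
    (σ : V → Bool) : |obsVal a b c Vs Es σ| ≤ |a| * Vs.card + (|b| + |c|) * Es.card := by
  calc |obsVal a b c Vs Es σ|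
      ≤ |a| * (Vs.filter fun v => σ v = true).card + |b| * mB Es σ false
          + |c| * mB Es σ true := by
        simp only [obsVal]
        refine (abs_add_le _ _).trans (add_le_add ((abs_add_le _ _).trans ?_) ?_) <;>
          simp only [abs_mul, Nat.abs_cast, le_refl]
    _ ≤ |a| * Vs.card + |b| * Es.card + |c| * Es.card := by
        gcongr
        · exact filter_subset _ _
        all_goals exact card_filter_le Es _
    _ = |a| * Vs.card + (|b| + |c|) * Es.card := by ring

/-- stability of the expected observable value on a subgraph `F` under a
perturbation of the vertex activities on a set `S` of vertices. -/
theorem stmt_1 {V : Type} [Fintype V] (β γ : ℝ) (hA : Antiferro β γ)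
    (lam lam₁ lam₂ : ℝ) (hlam : 0 < lam) (hlam₁ : 0 < lam₁) (hlam₂ : 0 < lam₂)
    (a b c : ℝ) (G : SimpleGraph V) (S : Set V) (F : G.Subgraph)
    (l₁ l₂ : V → ℝ)
    (hl₁ : ∀ v, l₁ v = if v ∈ S then lam₁ else lam)
    (hl₂ : ∀ v, l₂ v = if v ∈ S then lam₂ else lam) :
    |gExp (w2vec G β γ l₂) (obsVal a b c F.verts.toFinite.toFinset F.edgeSet.toFinite.toFinset) -
        gExp (w2vec G β γ l₁)
          (obsVal a b c F.verts.toFinite.toFinset F.edgeSet.toFinite.toFinset)| ≤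
      2 * (|a| + |b| + |c|) * ((Fintype.card V : ℝ) ^ 2 + ((edgeFin G).card : ℝ) ^ 2) *
        |lam₂ / lam₁ - 1| := by
  obtain ⟨hβ, hγ, -, -⟩ := hA
  set n := Fintype.card V
  set m := (edgeFin G).card
  have hl : ∀ v, l₂ v = l₁ v * if v ∈ S then lam₂ / lam₁ else 1 := fun v => by
    rw [hl₁, hl₂]; split_ifs <;> field_simp
  have hw₂ : w2vec G β γ l₂ = fun σ => w2vec G β γ l₁ σ *
      (lam₂ / lam₁) ^ (univ.filter fun v => σ v = true ∧ v ∈ S).card :=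
    funext (w2vec_eq_mul_pow G β γ S hl)
  have hVs : (F.verts.toFinite.toFinset.card : ℝ) ≤ n := by exact_mod_cast card_le_univ _
  have hEs : (F.edgeSet.toFinite.toFinset.card : ℝ) ≤ m := by
    refine Nat.cast_le.2 (card_le_card fun e he => ?_)
    simpa [edgeFin] using F.edgeSet_subset (by simpa using he)
  have hobs : ∀ σ, |obsVal a b c F.verts.toFinite.toFinset F.edgeSet.toFinite.toFinset σ|
      ≤ |a| * n + (|b| + |c|) * m := fun σ =>
    (abs_obsVal_le a b c _ _ σ).trans (by gcongr)
  rw [hw₂]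
  calc _ ≤ 2 * (|a| * n + (|b| + |c|) * m) * n * |lam₂ / lam₁ - 1| :=
        abs_gExp_mul_pow_sub_gExp_le (fun σ => card_le_univ _) (div_pos hlam₂ hlam₁)
          (w2vec_nonneg G hβ hγ fun v => by rw [hl₁]; split_ifs <;> positivity)
          (by positivity) hobs
    _ ≤ _ := by
        gcongr ?_ * _
        nlinarith [abs_nonneg a, abs_nonneg b, abs_nonneg c, sq_nonneg ((n : ℝ) - m),
          mul_nonneg (Nat.cast_nonneg n : (0 : ℝ) ≤ n) (Nat.cast_nonneg m : (0 : ℝ) ≤ m)]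
end
end

section
/- Let q ≥ 2 be an integer and β > 1 a real. For an integer ℓ ≥ 0 let P_ℓ be the path with 2ℓ+1 edges, regarded as an edge-interaction gadget whose ports are its two endpoints, and let B_ℓ be its effective interaction in the q-state Potts model at activity β. Then B_0 = β and 0 < B_ℓ − 1 ≤ κ^ℓ (β − 1) for all ℓ ≥ 0, where κ = (β̂−1)(γ̂−1)/(β̂γ̂−1) ∈ (0,1) with β̂ = 1 + (β−1)²/((q−1)(2β+q−2)) and γ̂ = 1 + (β−1)²/(2β+q−2). Consequently, there is a constant C = C(q,β) > 0 such that for every rational r ∈ (0,1/2) there exists a path 𝒫 with at most C·(1 + log(1/r)) edges satisfying 0 < B_𝒫 − 1 < r. -/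
open Finset
attribute [local instance] Classical.propDecidable
noncomputable section

/-! With the colours of its two ends fixed, the Potts partition function of a path with `k` edges
is an entry of `T ^ k` for the transfer matrix `T = (β - 1) I + J`, whose eigenvalues are
`β + q - 1` (on constants) and `β - 1`. Hence
`B - 1 = q (β - 1) ^ k / ((β + q - 1) ^ k - (β - 1) ^ k)` for the path with `k` edges, while
`κ = ((β - 1) / (β + q - 1)) ^ 2`; so `B_ℓ - 1` decays geometrically at rate `κ`, and a path
with `O(log (1 / r))` edges brings it below `r`. -/

section ChainSum

variable {α R : Type*} [Fintype α] [CommSemiring R]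

def chainSum (w : α → α → R) (k : ℕ) (a b : α) : R :=
  ∑ σ : Fin (k + 1) → α with σ 0 = a ∧ σ (Fin.last k) = b,
    ∏ i : Fin k, w (σ i.castSucc) (σ i.succ)

theorem chainSum_zero [DecidableEq α] (w : α → α → R) (a b : α) :
    chainSum w 0 a b = if a = b then 1 else 0 := by
  rw [chainSum, Finset.sum_filter, ← (Equiv.funUnique (Fin 1) α).symm.sum_comp]
  simp [uniqueElim, ite_and]

theorem chainSum_succ (w : α → α → R) (k : ℕ) (a b : α) :
    chainSum w (k + 1) a b = ∑ d, w a d * chainSum w k d b := by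
  simp only [chainSum, Finset.sum_filter, Finset.mul_sum]
  rw [← (Fin.consEquiv fun _ => α).sum_comp, Fintype.sum_prod_type, Finset.sum_comm,
    Finset.sum_comm (γ := α)]
  refine Finset.sum_congr rfl fun τ _ => ?_
  simp [Fin.prod_univ_succ, Fin.cons_last, ite_and]

end ChainSum

section Potts

variable {α K : Type*} [Fintype α] [DecidableEq α]

def pottsEdgeWeight [One K] (β : K) (a b : α) : K := if a = b then β else 1

theorem sum_pottsEdgeWeight_mul [Ring K] (β : K) (a : α) (f : α → K) :
    ∑ d, pottsEdgeWeight β a d * f d = ∑ d, f d + (β - 1) * f a := by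
  have h : ∀ d, pottsEdgeWeight β a d * f d = f d + if a = d then (β - 1) * f d else 0 := by
    intro d
    by_cases had : a = d <;> simp [pottsEdgeWeight, had, sub_mul]
  simp [h, Finset.sum_add_distrib]

theorem chainSum_pottsEdgeWeight [Field K] [CharZero K] (β : K) (k : ℕ) (a b : α) :
    chainSum (pottsEdgeWeight β) k a b =
      ((β + Fintype.card α - 1) ^ k - (β - 1) ^ k) / Fintype.card α +
        if a = b then (β - 1) ^ k else 0 := by
  have hq : (Fintype.card α : K) ≠ 0 :=
    Nat.cast_ne_zero.mpr (Fintype.card_pos_iff.mpr ⟨a⟩).ne'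
  induction k generalizing a with
  | zero => simp [chainSum_zero]
  | succ k ih =>
    simp only [chainSum_succ, sum_pottsEdgeWeight_mul, ih, Finset.sum_add_distrib,
      Finset.sum_const, Finset.card_univ, nsmul_eq_mul, Finset.sum_ite_eq', Finset.mem_univ,
      if_true]
    field_simp
    split_ifs <;> ring

end Potts

@[simps]
def pathGraphEdge (k : ℕ) : Fin k ↪ Sym2 (Fin (k + 1)) where
  toFun i := s(i.castSucc, i.succ)
  inj' i j h := by
    simp only [Sym2.eq_iff, Fin.ext_iff, Fin.val_castSucc, Fin.val_succ] at h
    omega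

theorem edgeFin_pathGraph (k : ℕ) :
    edgeFin (SimpleGraph.pathGraph (k + 1)) = univ.map (pathGraphEdge k) := by
  ext e
  induction e with
  | _ u v =>
    simp only [edgeFin, Set.Finite.mem_toFinset, SimpleGraph.mem_edgeSet,
      SimpleGraph.pathGraph_adj, Finset.mem_map, Finset.mem_univ, true_and, pathGraphEdge_apply,
      Sym2.eq_iff, Fin.ext_iff, Fin.val_castSucc, Fin.val_succ]
    constructor
    · rintro (h | h)
      · exact ⟨⟨u, by omega⟩, .inl ⟨rfl, h⟩⟩
      · exact ⟨⟨v, by omega⟩, .inr ⟨rfl, h⟩⟩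
    · rintro ⟨i, h | h⟩ <;> omega

theorem pW_pathGraph {q : ℕ} (k : ℕ) (β : ℝ) (σ : Fin (k + 1) → Fin q) :
    pW (SimpleGraph.pathGraph (k + 1)) q β σ =
      ∏ i : Fin k, pottsEdgeWeight β (σ i.castSucc) (σ i.succ) := by
  rw [pW, mcount, edgeFin_pathGraph, Finset.filter_map, Finset.card_map, ← Finset.prod_const,
    Finset.prod_filter]
  simp [pottsEdgeWeight]

theorem effB_pathGraph {q : ℕ} (k : ℕ) {β : ℝ} (hβ : 0 < β) (c₀ c₁ : Fin q) :
    effB (SimpleGraph.pathGraph (k + 1)) q β 0 (Fin.last k) c₀ c₁ =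
      chainSum (pottsEdgeWeight β) k c₀ c₀ / chainSum (pottsEdgeWeight β) k c₀ c₁ := by
  simp only [effB, prW]
  rw [div_div_div_cancel_right₀]
  · simp only [chainSum, pW_pathGraph]
    -- the two sides differ only in the (classical vs. `Fin`) decidability instances
    congr!
  · exact (Finset.sum_pos (fun σ _ => pow_pos hβ _) ⟨fun _ => c₀, by simp⟩).ne'

theorem effB_pathGraph_sub_one {q : ℕ} {k : ℕ} (hk : 0 < k) {β : ℝ} (hβ : 1 < β)
    {c₀ c₁ : Fin q} (hc : c₀ ≠ c₁) :
    effB (SimpleGraph.pathGraph (k + 1)) q β 0 (Fin.last k) c₀ c₁ - 1 =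
      q * (β - 1) ^ k / ((β + q - 1) ^ k - (β - 1) ^ k) := by
  have hq : (0 : ℝ) < q := Nat.cast_pos.mpr (Fin.pos c₀)
  have hpow : (β - 1) ^ k < (β + q - 1) ^ k :=
    pow_lt_pow_left₀ (by linarith) (by linarith) hk.ne'
  have hne : (β + q - 1) ^ k - (β - 1) ^ k ≠ 0 := sub_ne_zero.mpr hpow.ne'
  rw [effB_pathGraph k (by linarith), chainSum_pottsEdgeWeight, chainSum_pottsEdgeWeight,
    if_pos rfl, if_neg hc, Fintype.card_fin, add_zero]
  field_simp
  ring

theorem kappa_eq_sq {q β βh γh : ℝ} (hq : 1 < q) (hβ : 1 < β)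
    (hβh : βh = 1 + (β - 1) ^ 2 / ((q - 1) * (2 * β + q - 2)))
    (hγh : γh = 1 + (β - 1) ^ 2 / (2 * β + q - 2)) :
    (βh - 1) * (γh - 1) / (βh * γh - 1) = ((β - 1) / (β + q - 1)) ^ 2 := by
  obtain ⟨E, hE, hE₀⟩ : ∃ E, 2 * β + q - 2 = E ∧ 0 < E := ⟨_, rfl, by linarith⟩
  have hS : (β + q - 1) ^ 2 = (β - 1) ^ 2 + q * E := by rw [← hE]; ring
  have hq₁ : q - 1 ≠ 0 := by linarith
  have hβ₁ : β - 1 ≠ 0 := by linarith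
  rw [hE] at hβh hγh
  have hden : βh * γh - 1 = (β - 1) ^ 2 * (β + q - 1) ^ 2 / ((q - 1) * E ^ 2) := by
    rw [hβh, hγh, hS]
    field_simp
    ring
  have hS₀ : (β - 1) ^ 2 + q * E ≠ 0 := by nlinarith
  rw [hden, div_pow, hβh, hγh, hS]
  field_simp
  ring

theorem sub_mul_pow_succ_div_le {d s : ℝ} (hd : 0 ≤ d) (hds : d < s) (n : ℕ) :
    (s - d) * d ^ (n + 1) / (s ^ (n + 1) - d ^ (n + 1)) ≤ (d / s) ^ n * d := by
  have hs : 0 < s := hd.trans_lt hds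
  have hden : 0 < s ^ (n + 1) - d ^ (n + 1) :=
    sub_pos.mpr (pow_lt_pow_left₀ hds hd n.succ_ne_zero)
  have hgap : 0 ≤ d ^ n * d * d * (s ^ n - d ^ n) := by
    have := pow_le_pow_left₀ hd hds.le n
    positivity
  rw [div_pow, div_mul_eq_mul_div, div_le_div_iff₀ hden (pow_pos hs n), pow_succ, pow_succ]
  nlinarith [hgap]

theorem one_lt_effB_pathGraph {q : ℕ} {k : ℕ} (hk : 0 < k) {β : ℝ} (hβ : 1 < β)
    {c₀ c₁ : Fin q} (hc : c₀ ≠ c₁) :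
    1 < effB (SimpleGraph.pathGraph (k + 1)) q β 0 (Fin.last k) c₀ c₁ := by
  have hq : (0 : ℝ) < q := Nat.cast_pos.mpr (Fin.pos c₀)
  rw [← sub_pos, effB_pathGraph_sub_one hk hβ hc]
  have hpow : (β - 1) ^ k < (β + q - 1) ^ k :=
    pow_lt_pow_left₀ (by linarith) (by linarith) hk.ne'
  exact div_pos (by positivity) (sub_pos.mpr hpow)

theorem effB_pathGraph_sub_one_le {q : ℕ} (n : ℕ) {β : ℝ} (hβ : 1 < β)
    {c₀ c₁ : Fin q} (hc : c₀ ≠ c₁) :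
    effB (SimpleGraph.pathGraph (n + 1 + 1)) q β 0 (Fin.last (n + 1)) c₀ c₁ - 1 ≤
      ((β - 1) / (β + q - 1)) ^ n * (β - 1) := by
  have hq : (0 : ℝ) < q := Nat.cast_pos.mpr (Fin.pos c₀)
  rw [effB_pathGraph_sub_one (by omega) hβ hc]
  convert sub_mul_pow_succ_div_le (d := β - 1) (s := β + q - 1) (by linarith) (by linarith) n
    using 2
  ring

theorem exists_log_bound_pow_mul_lt {κ D : ℝ} (hκ₀ : 0 < κ) (hκ₁ : κ < 1) (hD : 0 < D) :
    ∃ C > 0, ∀ r : ℝ, 0 < r → r ≤ 1 →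
      ∃ l : ℕ, (l : ℝ) ≤ C * (1 + Real.log (1 / r)) ∧ κ ^ l * D < r := by
  set c := -Real.log κ
  have hc : 0 < c := neg_pos.mpr (Real.log_neg hκ₀ hκ₁)
  set A := max 0 (Real.log D)
  refine ⟨max (A / c + 1) (1 / c), lt_max_of_lt_right (by positivity), fun r hr hr1 => ?_⟩
  set L := Real.log (1 / r)
  have hL : 0 ≤ L := Real.log_nonneg (one_le_one_div hr hr1)
  have hx : 0 ≤ (A + L) / c := div_nonneg (add_nonneg (le_max_left _ _) hL) hc.le
  refine ⟨⌊(A + L) / c⌋₊ + 1, ?_, ?_⟩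
  · have hfloor : (⌊(A + L) / c⌋₊ : ℝ) ≤ A / c + 1 / c * L :=
      (Nat.floor_le hx).trans_eq (by ring)
    push_cast
    nlinarith [le_max_left (A / c + 1) (1 / c), le_max_right (A / c + 1) (1 / c)]
  · have hlt : Real.log D + L < (⌊(A + L) / c⌋₊ + 1 : ℕ) * c := by
      have := Nat.lt_floor_add_one ((A + L) / c)
      rw [div_lt_iff₀ hc] at this
      push_cast
      linarith [le_max_right 0 (Real.log D)]
    have hr' : Real.log r = -L := by simp [L, Real.log_inv]
    rw [← Real.log_lt_log_iff (by positivity) hr, Real.log_mul (by positivity) hD.ne',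
      Real.log_pow, hr']
    linarith

/-- effective interactions of paths.  `B_ℓ` is the effective interaction of the
path with `2ℓ+1` edges; `B₀ = β`, `0 < B_ℓ − 1 ≤ κ^ℓ (β−1)` with `κ ∈ (0,1)`, and consequently
for every rational `r ∈ (0,1/2)` there is a path with `O(log(1/r))` edges whose effective
interaction lies in `(1, 1+r)`. -/
theorem stmt_4 (q : ℕ) (hq : 2 ≤ q) (β : ℝ) (hβ : 1 < β)
    (βh γh κ : ℝ)
    (hβh : βh = 1 + (β - 1) ^ 2 / (((q : ℝ) - 1) * (2 * β + q - 2)))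
    (hγh : γh = 1 + (β - 1) ^ 2 / (2 * β + q - 2))
    (hκ : κ = (βh - 1) * (γh - 1) / (βh * γh - 1))
    (B : ℕ → ℝ)
    (hB : ∀ l : ℕ, B l = effB (SimpleGraph.pathGraph (2 * l + 2)) q β
      ⟨0, by omega⟩ ⟨2 * l + 1, by omega⟩ ⟨0, by omega⟩ ⟨1, by omega⟩) :
    B 0 = β ∧ (0 < κ ∧ κ < 1) ∧
    (∀ l : ℕ, 0 < B l - 1 ∧ B l - 1 ≤ κ ^ l * (β - 1)) ∧
    ∃ C : ℝ, 0 < C ∧ ∀ r : ℚ, 0 < r → (r : ℝ) < 1 / 2 →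
      ∃ m : ℕ, 1 ≤ m ∧ (m : ℝ) ≤ C * (1 + Real.log (1 / (r : ℝ))) ∧
        0 < effB (SimpleGraph.pathGraph (m + 1)) q β
            ⟨0, by omega⟩ ⟨m, by omega⟩ ⟨0, by omega⟩ ⟨1, by omega⟩ - 1 ∧
        effB (SimpleGraph.pathGraph (m + 1)) q β
            ⟨0, by omega⟩ ⟨m, by omega⟩ ⟨0, by omega⟩ ⟨1, by omega⟩ - 1 < (r : ℝ) := by
  have hc : (⟨0, by omega⟩ : Fin q) ≠ ⟨1, by omega⟩ := by simp [Fin.ext_iff]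
  have hq' : (2 : ℝ) ≤ q := by exact_mod_cast hq
  have hratio : (β - 1) / (β + q - 1) < 1 := (div_lt_one (by linarith)).mpr (by linarith)
  have hκ' : κ = ((β - 1) / (β + q - 1)) ^ 2 :=
    hκ.trans (kappa_eq_sq (by linarith) hβ hβh hγh)
  have hκ₀ : 0 < κ := hκ' ▸ pow_pos (div_pos (by linarith) (by linarith)) 2
  have hκ₁ : κ < 1 :=
    hκ' ▸ pow_lt_one₀ (div_nonneg (by linarith) (by linarith)) hratio two_ne_zero
  have hbound : ∀ l : ℕ, 0 < B l - 1 ∧ B l - 1 ≤ κ ^ l * (β - 1) := fun l => by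
    rw [hB l, hκ', ← pow_mul, sub_pos]
    exact ⟨one_lt_effB_pathGraph (by omega) hβ hc, effB_pathGraph_sub_one_le (2 * l) hβ hc⟩
  refine ⟨?_, ⟨hκ₀, hκ₁⟩, hbound, ?_⟩
  · have h1 := effB_pathGraph_sub_one (k := 1) one_pos hβ hc
    rw [pow_one, pow_one, show β + q - 1 - (β - 1) = q by ring,
      mul_div_cancel_left₀ _ (by positivity)] at h1
    rw [hB 0]
    exact sub_left_inj.mp h1
  obtain ⟨C, hC, hl⟩ := exists_log_bound_pow_mul_lt hκ₀ hκ₁ (by linarith : 0 < β - 1)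
  refine ⟨2 * C + 1, by positivity, fun r hr hr2 => ?_⟩
  have hr' : (0 : ℝ) < r := by exact_mod_cast hr
  obtain ⟨l, hlC, hlr⟩ := hl r hr' (by linarith)
  have hL : 0 ≤ Real.log (1 / (r : ℝ)) := Real.log_nonneg (by rw [le_one_div] <;> linarith)
  refine ⟨2 * l + 1, by omega, ?_, hB l ▸ (hbound l).1, hB l ▸ (hbound l).2.trans_lt hlr⟩
  push_cast
  nlinarith
end
end

section
/- Let x* > 0, let I be a closed interval of positive reals with x* ∈ I, and let F : I → ℝ be continuous. Suppose that for all x₁, x₂, x₃ ∈ I with x₁·x₂ = x₃·x* it holds that F(x₁) + F(x₂) = F(x₃) + F(x*). Then there exists K ∈ ℝ such that F(x) = K·log(x/x*) + F(x*) for all x ∈ I. -/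
/-!
Substituting `x = x* · eᵗ` turns the functional equation into additivity of
`H t = F (x* · eᵗ) - F x*` on an interval containing `0`. There additivity gives
`H ((m / n) · x) = (m / n) · H x`, continuity extends this to all factors in `[0, 1]`, so `H`
is affine on the interval, and `H 0 = 0` makes it linear: `H t = K t`.
-/

open Set Filter Topology

def AdditiveOn (f : ℝ → ℝ) (s : Set ℝ) : Prop :=
  ∀ x ∈ s, ∀ y ∈ s, x + y ∈ s → f (x + y) = f x + f y

namespace AdditiveOn

variable {f : ℝ → ℝ} {s : Set ℝ}

theorem map_zero (hf : AdditiveOn f s) (h0 : (0 : ℝ) ∈ s) : f 0 = 0 := by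
  simpa using hf 0 h0 0 h0 (by simpa using h0)

theorem map_natCast_mul (hf : AdditiveOn f s) (h0 : (0 : ℝ) ∈ s) {y : ℝ} :
    ∀ {n : ℕ}, (∀ k ≤ n, (k : ℝ) * y ∈ s) → f (n * y) = n * f y
  | 0, _ => by simpa using hf.map_zero h0
  | n + 1, hy => by
    have hn : f (n * y) = n * f y := map_natCast_mul hf h0 fun k hk => hy k (by omega)
    have h1 : (1 : ℝ) * y ∈ s := by exact_mod_cast hy 1 (by omega)
    have hsucc := hf (n * y) (hy n (by omega)) y (by simpa using h1)
      (by simpa [add_mul] using hy (n + 1) le_rfl)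
    push_cast
    rw [add_mul, one_mul, hsucc, hn]
    ring

theorem map_div_natCast_mul (hf : AdditiveOn f s) (hs : Convex ℝ s) (h0 : (0 : ℝ) ∈ s)
    {x : ℝ} (hx : x ∈ s) {m n : ℕ} (hmn : m ≤ n) : f (m / n * x) = m / n * f x := by
  rcases n.eq_zero_or_pos with rfl | hn
  · simpa [Nat.le_zero.mp hmn] using hf.map_zero h0
  have hmul : ∀ k ≤ n, (k : ℝ) * (x / n) ∈ s := fun k hk => by
    rw [show (k : ℝ) * (x / n) = ((k : ℝ) / n) • x by rw [smul_eq_mul]; ring]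
    exact hs.smul_mem_of_zero_mem h0 hx
      ⟨by positivity, div_le_one_of_le₀ (by exact_mod_cast hk) (by positivity)⟩
  have hx_eq : f x = n * f (x / n) := by
    rw [← hf.map_natCast_mul h0 hmul, mul_div_cancel₀ x (by positivity)]
  rw [show (m : ℝ) / n * x = m * (x / n) by ring,
    hf.map_natCast_mul h0 fun k hk => hmul k (hk.trans hmn), hx_eq]
  field_simp

theorem map_mul_of_mem_Icc (hf : AdditiveOn f s) (hs : Convex ℝ s) (h0 : (0 : ℝ) ∈ s)
    (hcont : ContinuousOn f s) {x : ℝ} (hx : x ∈ s) {r : ℝ} (hr : r ∈ Icc (0 : ℝ) 1) :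
    f (r * x) = r * f x := by
  set q : ℕ → ℝ := fun n => ⌊r * n⌋₊ / n
  have hq_mem : ∀ n, q n ∈ Icc (0 : ℝ) 1 := fun n =>
    ⟨div_nonneg (Nat.cast_nonneg _) (Nat.cast_nonneg _),
      div_le_one_of_le₀ ((Nat.floor_le (mul_nonneg hr.1 n.cast_nonneg)).trans
        (mul_le_of_le_one_left n.cast_nonneg hr.2)) n.cast_nonneg⟩
  have hq : Tendsto q atTop (𝓝 r) :=
    (tendsto_nat_floor_mul_div_atTop hr.1).comp tendsto_natCast_atTop_atTop
  have hsmul : MapsTo (· * x) (Icc (0 : ℝ) 1) s := fun t ht => by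
    simpa [smul_eq_mul] using hs.smul_mem_of_zero_mem h0 hx ht
  have hlim : Tendsto (fun n => f (q n * x)) atTop (𝓝 (f (r * x))) :=
    ((hcont.comp (continuousOn_id.mul continuousOn_const) hsmul) r hr).tendsto.comp
      (tendsto_nhdsWithin_iff.2 ⟨hq, Eventually.of_forall hq_mem⟩)
  have hrat : ∀ n, f (q n * x) = q n * f x := fun n =>
    hf.map_div_natCast_mul hs h0 hx (Nat.floor_le_of_le (by
      nlinarith [hr.2, (Nat.cast_nonneg n : (0 : ℝ) ≤ n)]))
  simp only [hrat] at hlim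
  exact tendsto_nhds_unique hlim (hq.mul_const _)

theorem map_mul_add_mul (hf : AdditiveOn f s) (hs : Convex ℝ s) (h0 : (0 : ℝ) ∈ s)
    (hcont : ContinuousOn f s) {x y : ℝ} (hx : x ∈ s) (hy : y ∈ s) {a b : ℝ} (ha : 0 ≤ a)
    (hb : 0 ≤ b) (hab : a + b = 1) : f (a * x + b * y) = a * f x + b * f y := by
  have ha1 : a ∈ Icc (0 : ℝ) 1 := ⟨ha, by linarith⟩
  have hb1 : b ∈ Icc (0 : ℝ) 1 := ⟨hb, by linarith⟩
  rw [hf _ (by simpa using hs.smul_mem_of_zero_mem h0 hx ha1)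
      _ (by simpa using hs.smul_mem_of_zero_mem h0 hy hb1) (by simpa using hs hx hy ha hb hab),
    hf.map_mul_of_mem_Icc hs h0 hcont hx ha1, hf.map_mul_of_mem_Icc hs h0 hcont hy hb1]

theorem exists_eq_mul {a b : ℝ} (hf : AdditiveOn f (Icc a b)) (hcont : ContinuousOn f (Icc a b))
    (h0 : (0 : ℝ) ∈ Icc a b) : ∃ K, ∀ t ∈ Icc a b, f t = K * t := by
  have hf0 := hf.map_zero h0
  rcases (h0.1.trans h0.2).eq_or_lt with rfl | hab
  · refine ⟨0, fun t ht => ?_⟩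
    obtain rfl : t = 0 := by linarith [ht.1, ht.2, h0.1, h0.2]
    simpa using hf0
  have hba : 0 < b - a := sub_pos.2 hab
  have hinterp : ∀ t ∈ Icc a b, f t = ((b - t) * f a + (t - a) * f b) / (b - a) := by
    intro t ht
    have ht_eq : t = (b - t) / (b - a) * a + (t - a) / (b - a) * b := by field_simp; ring
    rw [eq_div_iff hba.ne', ht_eq, hf.map_mul_add_mul (convex_Icc a b) h0 hcont
      (left_mem_Icc.2 hab.le) (right_mem_Icc.2 hab.le) (div_nonneg (by linarith [ht.2]) hba.le)
      (div_nonneg (by linarith [ht.1]) hba.le) (by field_simp; ring), ← ht_eq]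
    field_simp
  refine ⟨(f b - f a) / (b - a), fun t ht => ?_⟩
  have hconst := hinterp 0 h0
  rw [hf0] at hconst
  rw [hinterp t ht]
  field_simp at hconst ⊢
  linarith

end AdditiveOn

theorem Real.mul_exp_mem_Icc_iff {c lo hi t : ℝ} (hc : 0 < c) (hlo : 0 < lo) (hhi : 0 < hi) :
    c * Real.exp t ∈ Icc lo hi ↔ t ∈ Icc (Real.log (lo / c)) (Real.log (hi / c)) := by
  simp only [mem_Icc]
  rw [Real.log_le_iff_le_exp (by positivity), Real.le_log_iff_exp_le (by positivity),
    div_le_iff₀ hc, le_div_iff₀ hc, mul_comm (Real.exp t)]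

/-- Let x* > 0, let I be a closed interval of positive reals with x* ∈ I, and let
F : I → ℝ be continuous. Suppose that for all x₁, x₂, x₃ ∈ I with x₁·x₂ = x₃·x* it holds that
F(x₁) + F(x₂) = F(x₃) + F(x*). Then there exists K ∈ ℝ such that
F(x) = K·log(x/x*) + F(x*) for all x ∈ I. -/
theorem stmt_5 (xstar lo hi : ℝ) (hxstar : 0 < xstar) (hlo : 0 < lo)
    (hmem : xstar ∈ Set.Icc lo hi)
    (F : ℝ → ℝ) (hF : ContinuousOn F (Set.Icc lo hi))
    (hfun : ∀ x₁ ∈ Set.Icc lo hi, ∀ x₂ ∈ Set.Icc lo hi, ∀ x₃ ∈ Set.Icc lo hi,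
      x₁ * x₂ = x₃ * xstar → F x₁ + F x₂ = F x₃ + F xstar) :
    ∃ K : ℝ, ∀ x ∈ Set.Icc lo hi, F x = K * Real.log (x / xstar) + F xstar := by
  have hmaps : ∀ t, xstar * Real.exp t ∈ Icc lo hi ↔
      t ∈ Icc (Real.log (lo / xstar)) (Real.log (hi / xstar)) := fun t =>
    Real.mul_exp_mem_Icc_iff hxstar hlo (hxstar.trans_le hmem.2)
  set H : ℝ → ℝ := fun t => F (xstar * Real.exp t) - F xstar
  have hadd : AdditiveOn H (Icc (Real.log (lo / xstar)) (Real.log (hi / xstar))) := by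
    intro s hs t ht hst
    have := hfun _ ((hmaps s).2 hs) _ ((hmaps t).2 ht) _ ((hmaps _).2 hst)
      (by rw [Real.exp_add]; ring)
    simp only [H]
    linarith
  have hcont : ContinuousOn H (Icc (Real.log (lo / xstar)) (Real.log (hi / xstar))) :=
    (hF.comp (by fun_prop) fun t ht => (hmaps t).2 ht).sub continuousOn_const
  obtain ⟨K, hK⟩ := hadd.exists_eq_mul hcont ((hmaps 0).1 (by simpa using hmem))
  refine ⟨K, fun x hx => ?_⟩
  have hx_eq : xstar * Real.exp (Real.log (x / xstar)) = x := by
    rw [Real.exp_log (div_pos (hlo.trans_le hx.1) hxstar)]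
    field_simp
  have := hK _ ((hmaps _).1 (hx_eq ▸ hx))
  simp only [H, hx_eq] at this
  linarith
end
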